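/- For all n ≥ 1 and k ∈ [n], the map Ψ_{n,k} sending σ^{(k,1)} to rc(σ)^{(n+1-k,1)} is a bijection from {π ∈ S_n : π(k)=1} to {π ∈ S_n : π(n+1−k)=1} that preserves the number of crossings; in particular Σ_{σ ∈ S_n, σ(k)=1} q^{crs(σ)} = Σ_{σ ∈ S_n, σ(n+1-k)=1} q^{crs(σ)}. -/

import Mathlib

open scoped Classical

/-- The number of crossings of a permutation: pairs (i,j) with
i < j < σ(i) < σ(j) or σ(i) < σ(j) ≤ i < j. -/
noncomputable def crs {n : ℕ} (σ : Equiv.Perm (Fin n)) : ℕ :=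
  (Finset.univ.filter (fun p : Fin n × Fin n =>
    (p.1 < p.2 ∧ p.2 < σ p.1 ∧ σ p.1 < σ p.2) ∨
    (σ p.1 < σ p.2 ∧ σ p.2 ≤ p.1 ∧ p.1 < p.2))).card

/-- Number of upper transients: i with σ⁻¹(i) < i < σ(i). -/
noncomputable def utCount {n : ℕ} (σ : Equiv.Perm (Fin n)) : ℕ :=
  (Finset.univ.filter (fun i : Fin n => σ.symm i < i ∧ i < σ i)).card

/-- Number of lower transients: i with σ(i) < i < σ⁻¹(i). -/
noncomputable def ltCount {n : ℕ} (σ : Equiv.Perm (Fin n)) : ℕ :=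
  (Finset.univ.filter (fun i : Fin n => σ i < i ∧ i < σ.symm i)).card

/-- σ contains the pattern τ. -/
def Contains {n k : ℕ} (σ : Equiv.Perm (Fin n)) (τ : Fin k → ℕ) : Prop :=
  ∃ f : Fin k → Fin n, StrictMono f ∧ ∀ x y, σ (f x) < σ (f y) ↔ τ x < τ y

/-- σ avoids the pattern τ. -/
def Avoids {n k : ℕ} (σ : Equiv.Perm (Fin n)) (τ : Fin k → ℕ) : Prop :=
  ¬ Contains σ τ

def p123 : Fin 3 → ℕ := ![1, 2, 3]
def p132 : Fin 3 → ℕ := ![1, 3, 2]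
def p213 : Fin 3 → ℕ := ![2, 1, 3]
def p231 : Fin 3 → ℕ := ![2, 3, 1]
def p312 : Fin 3 → ℕ := ![3, 1, 2]
def p321 : Fin 3 → ℕ := ![3, 2, 1]

/-- Generating polynomial of crs over permutations of [n] satisfying P. -/
noncomputable def Fpoly (n : ℕ) (P : Equiv.Perm (Fin n) → Prop) : Polynomial ℤ :=
  ∑ σ : Equiv.Perm (Fin n), if P σ then Polynomial.X ^ crs σ else 0

/-- Insertion of the value 1 (here 0-based: value 0) at position k into σ. -/
noncomputable def insertAt {m : ℕ} (k : Fin (m + 1)) (σ : Equiv.Perm (Fin m)) :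
    Equiv.Perm (Fin (m + 1)) :=
  (Fin.cycleRange k).trans (Equiv.Perm.decomposeFin.symm (0, σ))

/-- Reverse-complement of a permutation. -/
noncomputable def rcPerm {m : ℕ} (σ : Equiv.Perm (Fin m)) : Equiv.Perm (Fin m) :=
  (Fin.revPerm.trans σ).trans Fin.revPerm

/-! The map `Ψ` sends `π` to the reverse-complement of `π` followed by the cyclic shift
`v ↦ v + 1` of values, which returns the value `0` to `0` at the mirrored position. The reflection
`(i, j) ↦ (rev j, rev i)` exchanges upper and lower crossings of `π` and `Ψ π`, the shift by one
turning the strict inequality of one kind into the weak inequality of the other, except for the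
pairs through the position `p` of the value `0`: `Ψ` loses the lower crossings `(p, b)` with
`p < b`, `π b ≤ p` and gains the pairs `(a, p)` with `a < p < π a`. There are as many of each,
because a permutation carries as many points from `[0, p]` above `p` as from above `p` into
`[0, p]`. -/

open Equiv Finset

variable {m n : ℕ}

theorem Equiv.Perm.card_filter_and_not_apply_eq {α : Type*} [Fintype α] (σ : Perm α)
    (P : α → Prop) [DecidablePred P] :
    #{x | P x ∧ ¬P (σ x)} = #{x | ¬P x ∧ P (σ x)} := by
  have hσ : #{x | P (σ x)} = #{x | P x} := card_equiv σ (by simp)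
  have hP := card_filter_add_card_filter_not (s := {x | P x}) (fun x => P (σ x))
  have hPσ := card_filter_add_card_filter_not (s := {x | P (σ x)}) P
  simp only [filter_filter, and_comm (a := P (σ _))] at hP hPσ
  omega

abbrev IsCrossing (σ : Perm (Fin n)) (i j : Fin n) : Prop :=
  (i < j ∧ j < σ i ∧ σ i < σ j) ∨ (σ i < σ j ∧ σ j ≤ i ∧ i < j)

lemma crs_eq_card_isCrossing (σ : Perm (Fin n)) :
    crs σ = #{q : Fin n × Fin n | IsCrossing σ q.1 q.2} := rfl

lemma IsCrossing.apply_lt_apply {σ : Perm (Fin n)} {i j : Fin n} (h : IsCrossing σ i j) :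
    σ i < σ j := by
  rcases h with h | h
  exacts [h.2.2, h.1]

lemma IsCrossing.apply_snd_ne_zero {σ : Perm (Fin (n + 1))} {i j : Fin (n + 1)}
    (h : IsCrossing σ i j) : σ j ≠ 0 :=
  ((Fin.zero_le _).trans_lt h.apply_lt_apply).ne'

lemma rcPerm_involutive : Function.Involutive (rcPerm : Perm (Fin m) → Perm (Fin m)) :=
  fun σ => by ext; simp [rcPerm]

lemma insertAt_self (k : Fin (m + 1)) (σ : Perm (Fin m)) : insertAt k σ k = 0 := by
  simp [insertAt]

lemma insertAt_succAbove (k : Fin (m + 1)) (σ : Perm (Fin m)) (j : Fin m) :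
    insertAt k σ (k.succAbove j) = (σ j).succ := by
  simp [insertAt, Perm.decomposeFin_symm_apply_succ]

/-- `Ψ_{n,k}` of the paper, which does not depend on `k`. -/
noncomputable def psi : Perm (Fin (m + 1)) ≃ Perm (Fin (m + 1)) :=
  (rcPerm_involutive.toPerm rcPerm).trans (Equiv.mulLeft (finRotate (m + 1)))

lemma psi_apply_rev (π : Perm (Fin (m + 1))) (i : Fin (m + 1)) :
    psi π i.rev = (π i).rev + 1 := by
  simp [psi, rcPerm, finRotate_apply]

lemma psi_apply_rev_eq_zero_iff (π : Perm (Fin (m + 1))) (i : Fin (m + 1)) :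
    psi π i.rev = 0 ↔ π i = 0 := by
  conv_lhs =>
    rw [psi_apply_rev, ← finRotate_apply, ← finRotate_last, (finRotate _).apply_eq_iff_eq]
  rw [Fin.rev_eq_iff, Fin.rev_last]

lemma psi_insertAt (k : Fin (m + 1)) (σ : Perm (Fin m)) :
    psi (insertAt k σ) = insertAt k.rev (rcPerm σ) := by
  ext1 i
  obtain rfl | ⟨j, rfl⟩ := k.rev.eq_self_or_eq_succAbove i
  · rw [insertAt_self, ← Fin.rev_rev k, psi_apply_rev_eq_zero_iff, Fin.rev_rev, insertAt_self]
  · rw [insertAt_succAbove, Fin.succAbove_rev_left, psi_apply_rev, insertAt_succAbove,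
      Fin.rev_succ, Fin.coeSucc_eq_succ]
    rfl

lemma val_psi_apply_rev (π : Perm (Fin (m + 1))) (i : Fin (m + 1)) :
    (psi π i.rev : ℕ) = if π i = 0 then 0 else m + 1 - π i := by
  simp only [psi_apply_rev, Fin.val_add_one, Fin.rev_eq_iff, Fin.rev_last, Fin.val_rev]
  split_ifs <;> omega

lemma card_filter_lt_lt_apply_eq {π : Perm (Fin (m + 1))} {p : Fin (m + 1)} (hp : π p = 0) :
    #{a | a < p ∧ p < π a} = #{b | p < b ∧ π b ≤ p} := by
  have h := π.card_filter_and_not_apply_eq (· ≤ p)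
  simp only [not_le] at h
  rw [← h]
  congr 1
  ext a
  simp only [mem_filter, mem_univ, true_and, and_congr_left_iff]
  intro hpa
  refine ⟨le_of_lt, fun hap => lt_of_le_of_ne hap ?_⟩
  rintro rfl
  simp [hp] at hpa

lemma isCrossing_psi_rev_or_iff {π : Perm (Fin (m + 1))} {p : Fin (m + 1)} (hp : π p = 0)
    (a b : Fin (m + 1)) :
    IsCrossing (psi π) b.rev a.rev ∨ (a = p ∧ p < b ∧ π b ≤ p) ↔
      IsCrossing π a b ∨ ((a < p ∧ p < π a) ∧ b = p) := by
  have hzero : ∀ x, π x = 0 ↔ x = p := fun x => π.injective.eq_iff' hp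
  have ha := hzero a
  have hb := hzero b
  simp only [IsCrossing, Fin.lt_def, Fin.le_def, Fin.ext_iff, Fin.val_rev, val_psi_apply_rev,
    Fin.val_zero] at ha hb ⊢
  split_ifs <;> omega

theorem crs_psi {π : Perm (Fin (m + 1))} {p : Fin (m + 1)} (hp : π p = 0) :
    crs (psi π) = crs π := by
  set reflected := univ.filter fun q : Fin (m + 1) × Fin (m + 1) =>
    IsCrossing (psi π) q.2.rev q.1.rev
  set lost := ({p} : Finset (Fin (m + 1))) ×ˢ univ.filter fun b => p < b ∧ π b ≤ p
  set gained := (univ.filter fun a => a < p ∧ p < π a) ×ˢ ({p} : Finset (Fin (m + 1)))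
  have hreflect : crs (psi π) = #reflected :=
    (card_equiv ((prodComm _ _).trans (Fin.revPerm.prodCongr Fin.revPerm))
      (fun q => by simp only [reflected, mem_filter, mem_univ, true_and]; rfl)).symm
  have hunion : reflected ∪ lost = (univ.filter fun q => IsCrossing π q.1 q.2) ∪ gained := by
    ext ⟨a, b⟩
    simp only [reflected, lost, gained, mem_union, mem_filter, mem_product, mem_singleton, mem_univ,
      true_and]
    exact isCrossing_psi_rev_or_iff hp a b
  have hdisj_lost : Disjoint reflected lost := by
    refine disjoint_left.2 fun q hq hlost => (mem_filter.1 hq).2.apply_snd_ne_zero ?_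
    rw [mem_singleton.1 (mem_product.1 hlost).1, psi_apply_rev_eq_zero_iff, hp]
  have hdisj_gained : Disjoint (univ.filter fun q => IsCrossing π q.1 q.2) gained := by
    refine disjoint_left.2 fun q hq hgained => (mem_filter.1 hq).2.apply_snd_ne_zero ?_
    rw [mem_singleton.1 (mem_product.1 hgained).2, hp]
  have hcard := congrArg card hunion
  rw [card_union_of_disjoint hdisj_lost, card_union_of_disjoint hdisj_gained, card_product,
    card_product, card_singleton, one_mul, mul_one, card_filter_lt_lt_apply_eq hp] at hcard
  rw [hreflect, crs_eq_card_isCrossing]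
  omega

theorem Psi_bijection (m k : ℕ) (hk : 1 ≤ k) (hkm : k ≤ m + 1) :
    ∃ Ψ : Equiv.Perm (Fin (m + 1)) → Equiv.Perm (Fin (m + 1)),
      (∀ σ : Equiv.Perm (Fin m),
        Ψ (insertAt ⟨k - 1, by omega⟩ σ) = insertAt ⟨m + 1 - k, by omega⟩ (rcPerm σ)) ∧
      Set.BijOn Ψ {π | π ⟨k - 1, by omega⟩ = 0} {π | π ⟨m + 1 - k, by omega⟩ = 0} ∧
      (∀ π : Equiv.Perm (Fin (m + 1)), π ⟨k - 1, by omega⟩ = 0 → crs (Ψ π) = crs π) ∧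
      Fpoly (m + 1) (fun π => π ⟨k - 1, by omega⟩ = 0) =
        Fpoly (m + 1) (fun π => π ⟨m + 1 - k, by omega⟩ = 0) := by
  have hrev : (⟨k - 1, by omega⟩ : Fin (m + 1)).rev = ⟨m + 1 - k, by omega⟩ :=
    Fin.ext (by simp only [Fin.val_rev]; omega)
  have hzero (π : Perm (Fin (m + 1))) :
      psi π ⟨m + 1 - k, by omega⟩ = 0 ↔ π ⟨k - 1, by omega⟩ = 0 := by
    rw [← hrev, psi_apply_rev_eq_zero_iff]
  refine ⟨psi, fun σ => by rw [psi_insertAt, hrev], psi.bijOn hzero,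
    fun π hπ => crs_psi hπ, ?_⟩
  refine Fintype.sum_equiv psi _ _ fun π => ?_
  by_cases hπ : π ⟨k - 1, by omega⟩ = 0
  · rw [if_pos hπ, if_pos ((hzero π).2 hπ), crs_psi hπ]
  · rw [if_neg hπ, if_neg (mt (hzero π).1 hπ)]
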